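/- Let D be a digraph. If D contains a cycle and (a,b) is an arc belonging to that cycle, then the transformation (b→a) belongs to ⟨D⟩, and (a→b) and (b→a) are R-related in ⟨D⟩. -/

import Mathlib

/-- The transformation of `{1,…,n}` sending `a` to `b` and fixing all other points. -/
def arcT {n : ℕ} (a b : Fin n) : Fin n → Fin n := fun v => if v = a then b else v

/-- The semigroup `⟨D⟩` generated by the arcs of the digraph `D`; transformations act on
the right, so a product `ε₁ε₂⋯ε_k` is the function `ε_k ∘ ⋯ ∘ ε₁`. -/
def genSg {n : ℕ} (D : Set (Fin n × Fin n)) : Set (Fin n → Fin n) :=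
  { α | ∃ l : List (Fin n × Fin n), l ≠ [] ∧ (∀ p ∈ l, p ∈ D) ∧
      α = l.foldl (fun f p => arcT p.1 p.2 ∘ f) id }

/-- The product `x·y` in the right-action convention: apply `x` first, then `y`. -/
def sgMul {n : ℕ} (x y : Fin n → Fin n) : Fin n → Fin n := y ∘ x

/-- The right ideal `xS¹ = {x} ∪ xS`. -/
def rIdeal {n : ℕ} (S : Set (Fin n → Fin n)) (x : Fin n → Fin n) : Set (Fin n → Fin n) :=
  insert x { y | ∃ s ∈ S, y = sgMul x s }

/-- The left ideal `S¹x = {x} ∪ Sx`. -/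
def lIdeal {n : ℕ} (S : Set (Fin n → Fin n)) (x : Fin n → Fin n) : Set (Fin n → Fin n) :=
  insert x { y | ∃ s ∈ S, y = sgMul s x }

/-- The two-sided ideal `S¹xS¹`. -/
def jIdeal {n : ℕ} (S : Set (Fin n → Fin n)) (x : Fin n → Fin n) : Set (Fin n → Fin n) :=
  { y | ∃ s ∈ insert id S, ∃ t ∈ insert id S, y = sgMul s (sgMul x t) }

def RRel {n : ℕ} (S : Set (Fin n → Fin n)) (x y : Fin n → Fin n) : Prop :=
  rIdeal S x = rIdeal S y

def LRel {n : ℕ} (S : Set (Fin n → Fin n)) (x y : Fin n → Fin n) : Prop :=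
  lIdeal S x = lIdeal S y

def JRel {n : ℕ} (S : Set (Fin n → Fin n)) (x y : Fin n → Fin n) : Prop :=
  jIdeal S x = jIdeal S y

def RTrivial {n : ℕ} (S : Set (Fin n → Fin n)) : Prop :=
  ∀ x ∈ S, ∀ y ∈ S, RRel S x y → x = y

def LTrivial {n : ℕ} (S : Set (Fin n → Fin n)) : Prop :=
  ∀ x ∈ S, ∀ y ∈ S, LRel S x y → x = y

def HTrivial {n : ℕ} (S : Set (Fin n → Fin n)) : Prop :=
  ∀ x ∈ S, ∀ y ∈ S, RRel S x y → LRel S x y → x = y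

def JTrivial {n : ℕ} (S : Set (Fin n → Fin n)) : Prop :=
  ∀ x ∈ S, ∀ y ∈ S, JRel S x y → x = y

/-- `α` has a cycle of length `k`: `k` distinct points `a₀,…,a_{k-1}` with
`α(aᵢ) = a_{i+1 mod k}`. -/
def IsCycleOf {n : ℕ} (α : Fin n → Fin n) (k : ℕ) : Prop :=
  0 < k ∧ ∃ a : ZMod k → Fin n, Function.Injective a ∧ ∀ i, α (a i) = a (i + 1)

/-- `l(D)`: the maximal length of a cycle of an element of `⟨D⟩`. -/
noncomputable def lD {n : ℕ} (D : Set (Fin n × Fin n)) : ℕ :=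
  sSup { k | ∃ α ∈ genSg D, IsCycleOf α k }

/-- The arc set of a graph. -/
def arcsOf {n : ℕ} (G : SimpleGraph (Fin n)) : Set (Fin n × Fin n) :=
  { p | G.Adj p.1 p.2 }

/-- `l(G)` for a graph `G`. -/
noncomputable def lG {n : ℕ} (G : SimpleGraph (Fin n)) : ℕ := lD (arcsOf G)

/-- Reachability along directed walks of `D`. -/
def dreach {n : ℕ} (D : Set (Fin n × Fin n)) : Fin n → Fin n → Prop :=
  Relation.ReflTransGen (fun a b => (a, b) ∈ D)

/-- The strong component of the vertex `v`. -/
def strongComp {n : ℕ} (D : Set (Fin n × Fin n)) (v : Fin n) : Set (Fin n) :=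
  { u | dreach D u v ∧ dreach D v u }

/-- The underlying graph of the digraph `D`. -/
def underlying {n : ℕ} (D : Set (Fin n × Fin n)) : SimpleGraph (Fin n) where
  Adj a b := a ≠ b ∧ ((a, b) ∈ D ∨ (b, a) ∈ D)
  symm := ⟨fun a b h => ⟨h.1.symm, h.2.symm⟩⟩
  loopless := ⟨fun a h => h.1 rfl⟩

/-- `v 0, v 1, …, v r` is a cycle of the digraph `D`. -/
def IsDCycle {n : ℕ} (D : Set (Fin n × Fin n)) (r : ℕ) (v : ℕ → Fin n) : Prop :=
  1 ≤ r ∧ v r = v 0 ∧ (∀ i < r, ∀ j < r, v i = v j → i = j) ∧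
    ∀ i < r, (v i, v (i + 1)) ∈ D

def HasDCycle {n : ℕ} (D : Set (Fin n × Fin n)) : Prop := ∃ r v, IsDCycle D r v

def DAcyclic {n : ℕ} (D : Set (Fin n × Fin n)) : Prop := ¬ HasDCycle D

/-- `G` is a subgroup contained in the transformation semigroup `S`. -/
def IsSubgroupIn {n : ℕ} (S G : Set (Fin n → Fin n)) : Prop :=
  G ⊆ S ∧ (∀ x ∈ G, ∀ y ∈ G, sgMul x y ∈ G) ∧
    ∃ e ∈ G, (∀ x ∈ G, sgMul e x = x ∧ sgMul x e = x) ∧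
      ∀ x ∈ G, ∃ y ∈ G, sgMul x y = e ∧ sgMul y x = e

/-- Every subgroup of `S` is trivial. -/
def SgAperiodic {n : ℕ} (S : Set (Fin n → Fin n)) : Prop :=
  ∀ G, IsSubgroupIn S G → G.Subsingleton

/-!
Relabel the cycle as a path `b = u₀ → u₁ → ⋯ → u_m = a` closed by the arc `(a, b)`.
The product `T = (a→b)(u_{m-1}→u_m)⋯(u₀→u₁)` of arcs of `D` sends `b ↦ u₁` and rotates
`u₁ → u₂ → ⋯ → u_m → u₁`, so `T^m` fixes `u₁, …, u_m` and sends `b` to `a`: it is `(b→a)`.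
And `(a→b)(b→a) = (b→a)` and `(b→a)(a→b) = (a→b)`, which gives the `R`-relation.
-/

section GeneratedSemigroup

variable {n : ℕ} {D : Set (Fin n × Fin n)}

lemma foldl_arcT_eq_comp (l : List (Fin n × Fin n)) (h : Fin n → Fin n) :
    l.foldl (fun f p => arcT p.1 p.2 ∘ f) h = l.foldl (fun f p => arcT p.1 p.2 ∘ f) id ∘ h := by
  induction l generalizing h with
  | nil => rfl
  | cons q l ih => simp only [List.foldl_cons, ih (arcT q.1 q.2 ∘ h), ih (arcT q.1 q.2 ∘ id)]; rfl

lemma arcT_mem_genSg {a b : Fin n} (h : (a, b) ∈ D) : arcT a b ∈ genSg D :=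
  ⟨[(a, b)], List.cons_ne_nil _ _, by simpa using h, rfl⟩

lemma sgMul_mem_genSg {x y : Fin n → Fin n} (hx : x ∈ genSg D) (hy : y ∈ genSg D) :
    sgMul x y ∈ genSg D := by
  obtain ⟨l₁, hl₁, hl₁D, rfl⟩ := hx
  obtain ⟨l₂, -, hl₂D, rfl⟩ := hy
  refine ⟨l₁ ++ l₂, by simp [hl₁], fun p hp => ?_, ?_⟩
  · rcases List.mem_append.mp hp with hp | hp
    exacts [hl₁D p hp, hl₂D p hp]
  · rw [List.foldl_append, foldl_arcT_eq_comp l₂ (l₁.foldl _ id)]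
    rfl

lemma iterate_mem_genSg {f : Fin n → Fin n} (hf : f ∈ genSg D) {k : ℕ} (hk : k ≠ 0) :
    f^[k] ∈ genSg D := by
  induction k with
  | zero => exact absurd rfl hk
  | succ k ih =>
    rcases Nat.eq_zero_or_pos k with rfl | hk
    · exact hf
    · rw [Function.iterate_succ']
      exact sgMul_mem_genSg (ih hk.ne') hf

end GeneratedSemigroup

lemma rIdeal_subset_of_eq_sgMul {n : ℕ} {S : Set (Fin n → Fin n)}
    (hS : ∀ x ∈ S, ∀ y ∈ S, sgMul x y ∈ S) {x y s : Fin n → Fin n} (hs : s ∈ S)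
    (hx : x = sgMul y s) : rIdeal S x ⊆ rIdeal S y := by
  rintro z (rfl | ⟨t, ht, rfl⟩)
  · exact Or.inr ⟨s, hs, hx⟩
  · exact Or.inr ⟨sgMul s t, hS s hs t ht, by rw [hx]; rfl⟩

lemma RRel_of_sgMul_eq {n : ℕ} {S : Set (Fin n → Fin n)}
    (hS : ∀ x ∈ S, ∀ y ∈ S, sgMul x y ∈ S) {x y : Fin n → Fin n} (hx : x ∈ S) (hy : y ∈ S)
    (hxy : sgMul x y = y) (hyx : sgMul y x = x) : RRel S x y :=
  subset_antisymm (rIdeal_subset_of_eq_sgMul hS hx hyx.symm)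
    (rIdeal_subset_of_eq_sgMul hS hy hxy.symm)

lemma sgMul_arcT_arcT {n : ℕ} (a b : Fin n) : sgMul (arcT a b) (arcT b a) = arcT b a := by
  funext x
  by_cases x = a <;> by_cases x = b <;> simp_all [sgMul, arcT]

section Path

variable {n : ℕ} {D : Set (Fin n × Fin n)} {u : ℕ → Fin n}

/-- The product `(u_{t-1}→u_t)⋯(u₀→u₁)`, in the right-action convention. -/
def pathShift (u : ℕ → Fin n) : ℕ → Fin n → Fin n
  | 0 => id
  | t + 1 => pathShift u t ∘ arcT (u t) (u (t + 1))

lemma pathShift_apply_of_notMem {t : ℕ} {x : Fin n} (hx : x ∉ u '' Set.Iio t) :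
    pathShift u t x = x := by
  induction t with
  | zero => rfl
  | succ t ih =>
    have hxt : x ≠ u t := fun h => hx ⟨t, Nat.lt_succ_self t, h.symm⟩
    have hx' : x ∉ u '' Set.Iio t := fun h => hx (Set.image_mono (Set.Iio_subset_Iio t.le_succ) h)
    simp [pathShift, arcT, hxt, ih hx']

lemma pathShift_apply_of_lt {t j : ℕ} (hu : Set.InjOn u (Set.Iic t)) (hj : j < t) :
    pathShift u t (u j) = u (j + 1) := by
  induction t with
  | zero => exact absurd hj (Nat.not_lt_zero j)
  | succ t ih =>
    rcases Nat.lt_succ_iff_lt_or_eq.mp hj with hj | rfl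
    · have hjt : u j ≠ u t := fun h =>
        hj.ne (hu (Set.mem_Iic.mpr (by omega)) (Set.mem_Iic.mpr (by omega)) h)
      simp only [pathShift, Function.comp_apply, arcT, hjt, if_false]
      exact ih (hu.mono (Set.Iic_subset_Iic.mpr t.le_succ)) hj
    · have hnot : u (j + 1) ∉ u '' Set.Iio j := by
        rintro ⟨i, hi, hij⟩
        have := hu (by simp at hi ⊢; omega) (by simp) hij
        simp at hi
        omega
      simp [pathShift, arcT, pathShift_apply_of_notMem hnot]

lemma pathShift_comp_mem_genSg {t : ℕ} (harc : ∀ j < t, (u j, u (j + 1)) ∈ D)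
    {g : Fin n → Fin n} (hg : g ∈ genSg D) : pathShift u t ∘ g ∈ genSg D := by
  induction t generalizing g with
  | zero => exact hg
  | succ t ih =>
    exact ih (fun j hj => harc j (by omega))
      (sgMul_mem_genSg hg (arcT_mem_genSg (harc t (Nat.lt_succ_self t))))

/-- The product `T = (u_m→u₀)(u_{m-1}→u_m)⋯(u₀→u₁)` of the arcs of the cycle. -/
def cycleShift (u : ℕ → Fin n) (m : ℕ) : Fin n → Fin n :=
  pathShift u m ∘ arcT (u m) (u 0)

variable {m : ℕ}

lemma cycleShift_apply_of_lt (hu : Set.InjOn u (Set.Iic m)) {s : ℕ} (hs : s < m) :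
    cycleShift u m (u s) = u (s + 1) := by
  have hsm : u s ≠ u m := fun h => hs.ne (hu (by simp; omega) (by simp) h)
  simp [cycleShift, arcT, hsm, pathShift_apply_of_lt hu hs]

lemma cycleShift_apply_last (hu : Set.InjOn u (Set.Iic m)) (hm : m ≠ 0) :
    cycleShift u m (u m) = u 1 := by
  simp [cycleShift, arcT, pathShift_apply_of_lt hu (Nat.pos_of_ne_zero hm)]

lemma cycleShift_apply_of_notMem {x : Fin n} (hx : x ∉ u '' Set.Iic m) :
    cycleShift u m x = x := by
  have hxm : x ≠ u m := fun h => hx ⟨m, Set.mem_Iic.mpr le_rfl, h.symm⟩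
  have hx' : x ∉ u '' Set.Iio m := fun h => hx (Set.image_mono Set.Iio_subset_Iic_self h)
  simp [cycleShift, arcT, hxm, pathShift_apply_of_notMem hx']

lemma iterate_cycleShift_apply (hu : Set.InjOn u (Set.Iic m)) {s k : ℕ} (hsk : s + k ≤ m) :
    (cycleShift u m)^[k] (u s) = u (s + k) := by
  induction k with
  | zero => rfl
  | succ k ih =>
    rw [Function.iterate_succ_apply', ih (by omega), cycleShift_apply_of_lt hu (by omega)]
    rfl

lemma iterate_cycleShift_eq_arcT (hu : Set.InjOn u (Set.Iic m)) (hm : m ≠ 0) :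
    (cycleShift u m)^[m] = arcT (u 0) (u m) := by
  funext x
  by_cases hx : x ∈ u '' Set.Iic m
  · obtain ⟨s, hs, rfl⟩ := hx
    rw [Set.mem_Iic] at hs
    rcases Nat.eq_zero_or_pos s with rfl | hs0
    · simpa [arcT] using iterate_cycleShift_apply hu (s := 0) (k := m) (by omega)
    · have hs0' : u s ≠ u 0 := fun h => hs0.ne' (hu (by simpa) (by simp) h)
      -- `u_s ↦ u_m ↦ u_1 ↦ u_s` in `(m - s) + 1 + (s - 1)` steps
      have hsplit : m = (s - 1) + (1 + (m - s)) := by omega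
      calc (cycleShift u m)^[m] (u s)
          = (cycleShift u m)^[(s - 1) + (1 + (m - s))] (u s) := by rw [← hsplit]
        _ = arcT (u 0) (u m) (u s) := ?_
      rw [Function.iterate_add_apply, Function.iterate_add_apply,
        iterate_cycleShift_apply hu (by omega), Nat.add_sub_cancel' hs, Function.iterate_one,
        cycleShift_apply_last hu hm, iterate_cycleShift_apply hu (by omega),
        Nat.add_sub_cancel' hs0]
      simp [arcT, hs0']
  · have hx0 : x ≠ u 0 := fun h => hx ⟨0, by simp, h.symm⟩
    rw [Function.iterate_fixed (cycleShift_apply_of_notMem hx)]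
    simp [arcT, hx0]

lemma arcT_mem_genSg_of_closedPath (hu : Set.InjOn u (Set.Iic m))
    (harc : ∀ j < m, (u j, u (j + 1)) ∈ D) (hclose : (u m, u 0) ∈ D) :
    arcT (u 0) (u m) ∈ genSg D := by
  rcases eq_or_ne m 0 with rfl | hm
  · exact arcT_mem_genSg hclose
  · rw [← iterate_cycleShift_eq_arcT hu hm]
    exact iterate_mem_genSg (pathShift_comp_mem_genSg harc (arcT_mem_genSg hclose)) hm

end Path

section Cycle

variable {n : ℕ} {D : Set (Fin n × Fin n)} {r : ℕ} {v : ℕ → Fin n}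

lemma IsDCycle.apply_mod_of_le (hc : IsDCycle D r v) {j : ℕ} (hj : j ≤ r) :
    v (j % r) = v j := by
  rcases hj.lt_or_eq with hj | rfl
  · rw [Nat.mod_eq_of_lt hj]
  · rw [Nat.mod_self, hc.2.1]

lemma IsDCycle.arc_mod (hc : IsDCycle D r v) (k : ℕ) : (v (k % r), v ((k + 1) % r)) ∈ D := by
  have hk : k % r < r := Nat.mod_lt k hc.1
  rw [← Nat.mod_add_mod k r 1, hc.apply_mod_of_le hk]
  exact hc.2.2.2 _ hk

lemma IsDCycle.exists_closedPath (hc : IsDCycle D r v) {i : ℕ} (hi : i < r) :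
    ∃ u : ℕ → Fin n, u 0 = v (i + 1) ∧ u (r - 1) = v i ∧ Set.InjOn u (Set.Iic (r - 1)) ∧
      ∀ j < r - 1, (u j, u (j + 1)) ∈ D := by
  refine ⟨fun j => v ((i + 1 + j) % r), hc.apply_mod_of_le hi, ?_, ?_, fun j _ => ?_⟩
  · show v ((i + 1 + (r - 1)) % r) = v i
    rw [show i + 1 + (r - 1) = i + r by omega, Nat.add_mod_right, Nat.mod_eq_of_lt hi]
  · intro j hj k hk hjk
    have hmod := hc.2.2.1 _ (Nat.mod_lt _ hc.1) _ (Nat.mod_lt _ hc.1) hjk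
    have hjk' : j % r = k % r := Nat.ModEq.add_left_cancel' (i + 1) hmod
    rwa [Nat.mod_eq_of_lt (by simp at hj; omega), Nat.mod_eq_of_lt (by simp at hk; omega)] at hjk'
  · simpa only [← add_assoc] using hc.arc_mod (i + 1 + j)

end Cycle

theorem stmt10_general (n : ℕ) (D : Set (Fin n × Fin n))
    (a b : Fin n) (r : ℕ) (v : ℕ → Fin n) (hcyc : IsDCycle D r v)
    (hab : ∃ i < r, v i = a ∧ v (i + 1) = b) :
    arcT b a ∈ genSg D ∧ RRel (genSg D) (arcT a b) (arcT b a) := by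
  obtain ⟨i, hi, rfl, rfl⟩ := hab
  have hclose : (v i, v (i + 1)) ∈ D := hcyc.2.2.2 i hi
  obtain ⟨u, hu0, hum, hinj, harc⟩ := hcyc.exists_closedPath hi
  have hba : arcT (v (i + 1)) (v i) ∈ genSg D := by
    rw [← hu0, ← hum]
    exact arcT_mem_genSg_of_closedPath hinj harc (by rwa [hu0, hum])
  exact ⟨hba, RRel_of_sgMul_eq (fun _ hx _ hy => sgMul_mem_genSg hx hy) (arcT_mem_genSg hclose)
    hba (sgMul_arcT_arcT _ _) (sgMul_arcT_arcT _ _)⟩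

/-- If the arc `(a,b)` lies on a cycle of `D`, then `(b→a) ∈ ⟨D⟩` and
`(a→b)` and `(b→a)` are `R`-related in `⟨D⟩`. -/
theorem stmt10 (n : ℕ) (D : Set (Fin n × Fin n)) (hloop : ∀ u : Fin n, (u, u) ∉ D)
    (a b : Fin n) (r : ℕ) (v : ℕ → Fin n) (hcyc : IsDCycle D r v)
    (hab : ∃ i < r, v i = a ∧ v (i + 1) = b) :
    arcT b a ∈ genSg D ∧ RRel (genSg D) (arcT a b) (arcT b a) :=
  stmt10_general n D a b r v hcyc hab
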